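/- For b₀ > 0 and t > 0, ∫_{ℝ} ∫_0^∞ e^{b₀·l} · ((|y|+l)/√(2πt³)) · exp(-(|y|+l)²/(2t)) dl dy = 2·Φ(b₀·√t)·exp(b₀²·t/2), where Φ is the standard normal CDF. -/

import Mathlib

open MeasureTheory Real

/-- The standard normal cumulative distribution function. -/
noncomputable def stdNormalCDF (z : ℝ) : ℝ :=
  ∫ y in Set.Iic z, (2 * π) ^ (-(1 : ℝ) / 2) * Real.exp (-y ^ 2 / 2)

/-!
The integrand is nonnegative and integrable on `ℝ × (0, ∞)`, so the order of integration can be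
swapped. For fixed `l ≥ 0`, `∫ (|y| + l) e^{-(|y|+l)²/(2t)} dy = 2 ∫_l^∞ u e^{-u²/(2t)} du
= 2t e^{-l²/(2t)}`, so integrating out `y` leaves the half-normal density
`√(2/(πt)) e^{-l²/(2t)}` of `L_t`. Completing the square,
`e^{bl} e^{-l²/(2t)} = e^{b²t/2} e^{-(l-bt)²/(2t)}`, and the remaining integral over `l > 0` is
the Gaussian tail `√(2πt) Φ(b√t)`.
-/

open Set Filter Topology

theorem integral_Ioi_comp_sub_right {E : Type*} [NormedAddCommGroup E] [NormedSpace ℝ E]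
    (g : ℝ → E) (a c : ℝ) : ∫ x in Ioi a, g (x - c) = ∫ x in Ioi (a - c), g x := by
  simpa using (measurePreserving_sub_right volume c).setIntegral_preimage_emb
    (measurableEmbedding_subRight c) g (Ioi (a - c))

theorem MeasureTheory.IntegrableOn.integrable_comp_abs {E : Type*} [NormedAddCommGroup E]
    {f : ℝ → E} (hf : IntegrableOn f (Ioi 0)) : Integrable fun x => f |x| := by
  have hpos : IntegrableOn (fun x => f |x|) (Ioi 0) :=
    hf.congr_fun (fun x hx => by rw [abs_of_pos hx]) measurableSet_Ioi
  have hneg : IntegrableOn (fun x => f |x|) (Iic 0) := by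
    have e : MeasurableEmbedding (Neg.neg : ℝ → ℝ) :=
      (MeasurableEquiv.neg ℝ).measurableEmbedding
    rw [integrableOn_Iic_iff_integrableOn_Iio, ← Measure.map_neg_eq_self (volume : Measure ℝ),
      e.integrableOn_map_iff]
    simpa [Function.comp_def] using hpos
  rw [← integrableOn_univ, ← Iic_union_Ioi (a := (0 : ℝ))]
  exact hneg.union hpos

theorem stdNormalCDF_eq_integral_Ioi (z : ℝ) :
    stdNormalCDF z = (√(2 * π))⁻¹ * ∫ v in Ioi (-z), exp (-v ^ 2 / 2) := by
  rw [stdNormalCDF, integral_const_mul, ← integral_comp_neg_Iic, sqrt_eq_rpow,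
    ← rpow_neg (by positivity)]
  simp [neg_div]

section Gaussian

variable {t : ℝ}

theorem integral_Ioi_exp_neg_sq_div (ht : 0 < t) (a : ℝ) :
    ∫ u in Ioi a, exp (-u ^ 2 / (2 * t)) = √(2 * π * t) * stdNormalCDF (-a / √t) := by
  have hs : 0 < √t := sqrt_pos.mpr ht
  rw [← mul_div_cancel₀ a hs.ne', ← integral_comp_mul_left_Ioi' _ _ hs,
    stdNormalCDF_eq_integral_Ioi]
  have hscale : ∀ v, exp (-(√t * v) ^ 2 / (2 * t)) = exp (-v ^ 2 / 2) := fun v => by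
    rw [mul_pow, sq_sqrt ht.le]; field_simp
  have hlim : -(-(√t * (a / √t)) / √t) = a / √t := by field_simp
  simp_rw [hscale, hlim, smul_eq_mul, sqrt_mul (by positivity : (0:ℝ) ≤ 2 * π)]
  field_simp

theorem exp_mul_mul_exp_neg_sq_div (ht : t ≠ 0) (b l : ℝ) :
    exp (b * l) * exp (-l ^ 2 / (2 * t))
      = exp (b ^ 2 * t / 2) * exp (-(l - b * t) ^ 2 / (2 * t)) := by
  rw [← exp_add, ← exp_add]
  congr 1
  field_simp
  ring

theorem integrable_exp_mul_mul_exp_neg_sq_div (ht : 0 < t) (b : ℝ) :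
    Integrable fun l => exp (b * l) * exp (-l ^ 2 / (2 * t)) := by
  simp_rw [exp_mul_mul_exp_neg_sq_div ht.ne']
  refine (((integrable_exp_neg_mul_sq (inv_pos.mpr (mul_pos two_pos ht))).comp_sub_right
    (b * t)).const_mul (exp (b ^ 2 * t / 2))).congr (.of_forall fun l => ?_)
  simp only [neg_mul, ← neg_div, inv_mul_eq_div]

theorem integral_Ioi_exp_mul_mul_exp_neg_sq_div (ht : 0 < t) (b : ℝ) :
    ∫ l in Ioi 0, exp (b * l) * exp (-l ^ 2 / (2 * t))
      = √(2 * π * t) * stdNormalCDF (b * √t) * exp (b ^ 2 * t / 2) := by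
  simp_rw [exp_mul_mul_exp_neg_sq_div ht.ne']
  rw [integral_const_mul, integral_Ioi_comp_sub_right (fun u => exp (-u ^ 2 / (2 * t))),
    integral_Ioi_exp_neg_sq_div ht, zero_sub, neg_neg, mul_div_assoc b t, div_sqrt]
  ring

theorem hasDerivAt_neg_mul_exp_neg_sq_div (ht : t ≠ 0) (u : ℝ) :
    HasDerivAt (fun u => -t * exp (-u ^ 2 / (2 * t))) (u * exp (-u ^ 2 / (2 * t))) u := by
  refine ((((hasDerivAt_id' u).pow 2).neg.div_const (2 * t)).exp.const_mul (-t)).congr_deriv ?_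
  simp only [Pi.neg_apply, Pi.pow_apply]
  field_simp
  ring

theorem tendsto_neg_mul_exp_neg_add_sq_div (ht : 0 < t) (l : ℝ) :
    Tendsto (fun y => -t * exp (-(y + l) ^ 2 / (2 * t))) atTop (𝓝 0) := by
  have hsq : Tendsto (fun y : ℝ => -(y + l) ^ 2 / (2 * t)) atTop atBot :=
    (tendsto_neg_atTop_atBot.comp ((tendsto_pow_atTop two_ne_zero).comp
      (tendsto_atTop_add_const_right _ l tendsto_id))).atBot_div_const (by positivity)
  simpa using (tendsto_exp_atBot.comp hsq).const_mul (-t)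

theorem hasDerivAt_neg_mul_exp_neg_add_sq_div (ht : t ≠ 0) (l y : ℝ) :
    HasDerivAt (fun y => -t * exp (-(y + l) ^ 2 / (2 * t)))
      ((y + l) * exp (-(y + l) ^ 2 / (2 * t))) y :=
  (hasDerivAt_neg_mul_exp_neg_sq_div ht (y + l)).comp_add_const y l

theorem integrableOn_Ioi_add_mul_exp_neg_add_sq_div (ht : 0 < t) {l : ℝ} (hl : 0 ≤ l) :
    IntegrableOn (fun y => (y + l) * exp (-(y + l) ^ 2 / (2 * t))) (Ioi 0) :=
  integrableOn_Ioi_deriv_of_nonneg' (fun y _ => hasDerivAt_neg_mul_exp_neg_add_sq_div ht.ne' l y)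
    (fun _ hy => mul_nonneg (add_nonneg (le_of_lt hy) hl) (exp_pos _).le)
    (tendsto_neg_mul_exp_neg_add_sq_div ht l)

theorem integral_Ioi_add_mul_exp_neg_add_sq_div (ht : 0 < t) {l : ℝ} (hl : 0 ≤ l) :
    ∫ y in Ioi 0, (y + l) * exp (-(y + l) ^ 2 / (2 * t)) = t * exp (-l ^ 2 / (2 * t)) := by
  rw [integral_Ioi_of_hasDerivAt_of_nonneg'
    (fun y _ => hasDerivAt_neg_mul_exp_neg_add_sq_div ht.ne' l y)
    (fun _ hy => mul_nonneg (add_nonneg (le_of_lt hy) hl) (exp_pos _).le)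
    (tendsto_neg_mul_exp_neg_add_sq_div ht l)]
  simp

end Gaussian

-- The joint density of `(B_t, L_t)` at `(y, l)`, `l ≥ 0`.
noncomputable def localTimeDensity (t y l : ℝ) : ℝ :=
  (|y| + l) / √(2 * π * t ^ 3) * exp (-(|y| + l) ^ 2 / (2 * t))

section LocalTime
variable {t : ℝ}

theorem localTimeDensity_nonneg {l : ℝ} (hl : 0 ≤ l) (y : ℝ) :
    0 ≤ localTimeDensity t y l := by
  unfold localTimeDensity; positivity

theorem continuous_localTimeDensity (t : ℝ) :
    Continuous (Function.uncurry (localTimeDensity t)) := by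
  unfold localTimeDensity; fun_prop

theorem localTimeDensity_eq (t y l : ℝ) :
    localTimeDensity t y l
      = (√(2 * π * t ^ 3))⁻¹ * ((|y| + l) * exp (-(|y| + l) ^ 2 / (2 * t))) := by
  unfold localTimeDensity; ring

theorem integrable_localTimeDensity (ht : 0 < t) {l : ℝ} (hl : 0 ≤ l) :
    Integrable fun y => localTimeDensity t y l := by
  simp_rw [localTimeDensity_eq]
  exact ((integrableOn_Ioi_add_mul_exp_neg_add_sq_div ht hl).integrable_comp_abs).const_mul _

theorem integral_localTimeDensity (ht : 0 < t) {l : ℝ} (hl : 0 ≤ l) :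
    ∫ y, localTimeDensity t y l = √(2 / (π * t)) * exp (-l ^ 2 / (2 * t)) := by
  simp_rw [localTimeDensity_eq]
  rw [integral_const_mul,
    integral_comp_abs (f := fun y => (y + l) * exp (-(y + l) ^ 2 / (2 * t))),
    integral_Ioi_add_mul_exp_neg_add_sq_div ht hl]
  have hC : √(2 * π * t ^ 3) = t * √(2 * π * t) := by
    rw [show 2 * π * t ^ 3 = t ^ 2 * (2 * π * t) by ring, sqrt_mul (by positivity), sqrt_sq ht.le]
  have hc : √(2 / (π * t)) = 2 / √(2 * π * t) := by
    rw [show 2 / (π * t) = 2 ^ 2 / (2 * π * t) by ring, sqrt_div' _ (by positivity),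
      sqrt_sq zero_le_two]
  rw [hC, hc]
  field_simp

theorem integral_exp_mul_localTimeDensity (ht : 0 < t) (b : ℝ) {l : ℝ} (hl : 0 ≤ l) :
    ∫ y, exp (b * l) * localTimeDensity t y l
      = √(2 / (π * t)) * (exp (b * l) * exp (-l ^ 2 / (2 * t))) := by
  rw [integral_const_mul, integral_localTimeDensity ht hl]
  ring

theorem integrable_exp_mul_localTimeDensity (ht : 0 < t) (b : ℝ) :
    Integrable (Function.uncurry fun y l => exp (b * l) * localTimeDensity t y l)
      ((volume : Measure ℝ).prod (volume.restrict (Ioi 0))) := by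
  have hcont : Continuous (Function.uncurry fun y l => exp (b * l) * localTimeDensity t y l) :=
    (continuous_exp.comp (continuous_const.mul continuous_snd)).mul (continuous_localTimeDensity t)
  rw [integrable_prod_iff' hcont.aestronglyMeasurable]
  refine ⟨(ae_restrict_mem measurableSet_Ioi).mono fun l hl =>
    (integrable_localTimeDensity ht (le_of_lt hl)).const_mul (exp (b * l)), ?_⟩
  refine ((integrable_exp_mul_mul_exp_neg_sq_div ht b).const_mul √(2 / (π * t))).integrableOn
    |>.congr_fun (fun l hl => ?_) measurableSet_Ioi
  have hnn : ∀ y, 0 ≤ exp (b * l) * localTimeDensity t y l :=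
    fun y => mul_nonneg (exp_pos _).le (localTimeDensity_nonneg (le_of_lt hl) y)
  simp only [Function.uncurry_apply_pair, Real.norm_of_nonneg (hnn _)]
  rw [integral_exp_mul_localTimeDensity ht b (le_of_lt hl)]

end LocalTime

theorem stmt_4_general (b₀ t : ℝ) (ht : 0 < t) :
    (∫ y : ℝ, ∫ l in Set.Ioi (0 : ℝ),
        Real.exp (b₀ * l) * ((|y| + l) / Real.sqrt (2 * π * t ^ 3)) *
          Real.exp (-(|y| + l) ^ 2 / (2 * t)))
      = 2 * stdNormalCDF (b₀ * Real.sqrt t) * Real.exp (b₀ ^ 2 * t / 2) := by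
  have hρ : ∀ y l, exp (b₀ * l) * ((|y| + l) / √(2 * π * t ^ 3)) *
      exp (-(|y| + l) ^ 2 / (2 * t)) = exp (b₀ * l) * localTimeDensity t y l :=
    fun _ _ => mul_assoc _ _ _
  simp only [hρ]
  rw [integral_integral_swap (integrable_exp_mul_localTimeDensity ht b₀),
    setIntegral_congr_fun measurableSet_Ioi
      fun l hl => integral_exp_mul_localTimeDensity ht b₀ (le_of_lt hl),
    integral_const_mul, integral_Ioi_exp_mul_mul_exp_neg_sq_div ht]
  have h2 : √(2 / (π * t)) * √(2 * π * t) = 2 := by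
    rw [← sqrt_mul (by positivity), show 2 / (π * t) * (2 * π * t) = 2 ^ 2 by field_simp,
      sqrt_sq zero_le_two]
  linear_combination stdNormalCDF (b₀ * √t) * exp (b₀ ^ 2 * t / 2) * h2

theorem stmt_4 (b₀ t : ℝ) (hb₀ : 0 < b₀) (ht : 0 < t) :
    (∫ y : ℝ, ∫ l in Set.Ioi (0 : ℝ),
        Real.exp (b₀ * l) * ((|y| + l) / Real.sqrt (2 * π * t ^ 3)) *
          Real.exp (-(|y| + l) ^ 2 / (2 * t)))
      = 2 * stdNormalCDF (b₀ * Real.sqrt t) * Real.exp (b₀ ^ 2 * t / 2) :=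
  stmt_4_general b₀ t ht
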